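/- arXiv:1809.05563 — 2 statements merged into one kernel-verified Lean document; each statement's English description precedes it below -/
import Mathlib

section
/- For every β₁ > 0 and T > 0 there exists a constant K = K(β₁, T) such that for all 0 ≤ t₂ ≤ t₁ ≤ T and all y ∈ ℝ, ∫_{t₂}^{t₁} ∫_ℝ p_{t₁−s}(y−x)² e^{2β₁|x|} dx ds ≤ K e^{2β₁|y|} (t₁ − t₂)^{1/2}. -/
/-!
Squaring the heat kernel halves its variance and costs a factor `(2πτ)^{-1/2}`:
`p_τ(z)² = (2πτ)^{-1/2} e^{-z²/(2τ)} p_τ(z)`. The weight is controlled by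
`2β|x| ≤ 2β|y| + 2|β||y - x|`, and the surplus Gaussian decay absorbs the linear term,
`2|β||z| - z²/(2τ) ≤ 2β²τ`. Hence the spatial integral is at most
`e^{2β²τ} e^{2β|y|} (2πτ)^{-1/2}` because `p_τ(y - ·)` has mass one, and integrating
`(t₁ - s)^{-1/2}` over `[t₂, t₁]` gives `2 (t₁ - t₂)^{1/2}`.
-/

open MeasureTheory Real

/-- The one-dimensional heat (Gaussian) kernel `p_t(x) = (2πt)^{-1/2} exp(-x²/(2t))`. -/
noncomputable def heatKernel (t x : ℝ) : ℝ :=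
  (Real.sqrt (2 * Real.pi * t))⁻¹ * Real.exp (-(x ^ 2) / (2 * t))

open ProbabilityTheory Set

lemma heatKernel_sub_eq_gaussianPDFReal {τ : ℝ} (hτ : 0 ≤ τ) (y x : ℝ) :
    heatKernel τ (y - x) = gaussianPDFReal y τ.toNNReal x := by
  rw [heatKernel, gaussianPDFReal_def, coe_toNNReal τ hτ, ← neg_sub, neg_sq]

lemma integral_heatKernel_sub {τ : ℝ} (hτ : 0 < τ) (y : ℝ) :
    ∫ x, heatKernel τ (y - x) = 1 := by
  simp_rw [heatKernel_sub_eq_gaussianPDFReal hτ.le]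
  exact integral_gaussianPDFReal_eq_one y (toNNReal_pos.mpr hτ).ne'

lemma two_mul_abs_le_sq_mul_add_sq_div (β τ z : ℝ) (hτ : 0 < τ) :
    2 * |β| * |z| ≤ 2 * β ^ 2 * τ + z ^ 2 / (2 * τ) := by
  have key : 0 ≤ (|z| - 2 * |β| * τ) ^ 2 / (2 * τ) := by positivity
  have expand : (|z| - 2 * |β| * τ) ^ 2 / (2 * τ) =
      2 * β ^ 2 * τ + z ^ 2 / (2 * τ) - 2 * |β| * |z| := by
    rw [← sq_abs z, ← sq_abs β]
    field_simp
    ring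
  linarith

lemma heatKernel_sq_mul_exp_le (β y x : ℝ) {τ : ℝ} (hτ : 0 < τ) :
    heatKernel τ (y - x) ^ 2 * exp (2 * β * |x|) ≤
      exp (2 * β ^ 2 * τ) * exp (2 * β * |y|) / √(2 * π * τ) * heatKernel τ (y - x) := by
  have htri : 2 * β * |x| ≤ 2 * β * |y| + 2 * |β| * |y - x| := by
    have hy : |y| - |x| ≤ |y - x| := abs_sub_abs_le_abs_sub y x
    have hx : |x| - |y| ≤ |y - x| := abs_sub_comm x y ▸ abs_sub_abs_le_abs_sub x y
    cases abs_cases β <;> nlinarith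
  have hexp : -(y - x) ^ 2 / (2 * τ) + 2 * β * |x| ≤ 2 * β ^ 2 * τ + 2 * β * |y| := by
    have hamgm := two_mul_abs_le_sq_mul_add_sq_div β τ (y - x) hτ
    have hneg : -(y - x) ^ 2 / (2 * τ) = -((y - x) ^ 2 / (2 * τ)) := neg_div _ _
    linarith
  calc heatKernel τ (y - x) ^ 2 * exp (2 * β * |x|)
      = exp (-(y - x) ^ 2 / (2 * τ) + 2 * β * |x|) / √(2 * π * τ) * heatKernel τ (y - x) := by
        rw [heatKernel, exp_add]; ring
    _ ≤ exp (2 * β ^ 2 * τ + 2 * β * |y|) / √(2 * π * τ) * heatKernel τ (y - x) := by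
        have : 0 ≤ heatKernel τ (y - x) := by rw [heatKernel]; positivity
        gcongr
    _ = _ := by rw [exp_add]

lemma integral_heatKernel_sq_mul_exp_le (β y : ℝ) {τ : ℝ} (hτ : 0 < τ) :
    ∫ x, heatKernel τ (y - x) ^ 2 * exp (2 * β * |x|) ≤
      exp (2 * β ^ 2 * τ) * exp (2 * β * |y|) / √(2 * π * τ) := by
  have hint : Integrable fun x ↦ heatKernel τ (y - x) := by
    simpa only [heatKernel_sub_eq_gaussianPDFReal hτ.le] using integrable_gaussianPDFReal _ _
  calc ∫ x, heatKernel τ (y - x) ^ 2 * exp (2 * β * |x|)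
      ≤ ∫ x, exp (2 * β ^ 2 * τ) * exp (2 * β * |y|) / √(2 * π * τ) * heatKernel τ (y - x) :=
        integral_mono_of_nonneg (ae_of_all _ fun _ ↦ by positivity) (hint.const_mul _)
          (ae_of_all _ fun x ↦ heatKernel_sq_mul_exp_le β y x hτ)
    _ = _ := by rw [integral_const_mul, integral_heatKernel_sub hτ, mul_one]

lemma intervalIntegrable_inv_sqrt_sub_and_integral {a b : ℝ} (hab : a ≤ b) :
    IntervalIntegrable (fun s ↦ (√(b - s))⁻¹) volume a b ∧
      ∫ s in a..b, (√(b - s))⁻¹ = 2 * √(b - a) := by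
  have hrpow : EqOn (fun s ↦ (√(b - s))⁻¹) (fun s ↦ (b - s) ^ (-(1 / 2) : ℝ)) (uIcc a b) :=
    fun s hs ↦ by
      rw [uIcc_of_le hab] at hs
      dsimp only
      rw [Real.sqrt_eq_rpow, rpow_neg (sub_nonneg.mpr hs.2)]
  constructor
  · refine (intervalIntegrable_congr (hrpow.mono Ioc_subset_Icc_self)).mpr ?_
    simpa using ((intervalIntegral.intervalIntegrable_rpow' (r := -(1 / 2))
      (by norm_num)).comp_sub_left b (a := 0) (b := b - a)).symm
  · rw [intervalIntegral.integral_congr hrpow,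
      intervalIntegral.integral_comp_sub_left (fun u ↦ u ^ (-(1 / 2) : ℝ)), sub_self,
      integral_rpow (Or.inl (by norm_num)), zero_rpow (by norm_num), Real.sqrt_eq_rpow]
    norm_num
    ring

lemma intervalIntegral_le_of_le_mul_inv_sqrt_sub {f : ℝ → ℝ} {a b C : ℝ} (hab : a ≤ b)
    (hf₀ : ∀ s ∈ Ioo a b, 0 ≤ f s) (hf : ∀ s ∈ Ioo a b, f s ≤ C * (√(b - s))⁻¹) :
    ∫ s in a..b, f s ≤ 2 * C * √(b - a) := by
  obtain ⟨hint, hval⟩ := intervalIntegrable_inv_sqrt_sub_and_integral hab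
  have hint' : IntegrableOn (fun s ↦ C * (√(b - s))⁻¹) (Ioo a b) :=
    ((hint.const_mul C).1).mono_set Ioo_subset_Ioc_self
  calc ∫ s in a..b, f s ≤ ∫ s in a..b, C * (√(b - s))⁻¹ := by
        simp only [intervalIntegral.integral_of_le hab, integral_Ioc_eq_integral_Ioo]
        exact integral_mono_of_nonneg (ae_restrict_of_forall_mem measurableSet_Ioo hf₀) hint'
          (ae_restrict_of_forall_mem measurableSet_Ioo hf)
    _ = 2 * C * √(b - a) := by rw [intervalIntegral.integral_const_mul, hval]; ring

theorem heatKernel_sq_time_integral_le_general (β₁ T : ℝ) :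
    ∃ K : ℝ, ∀ t₂ t₁ y : ℝ, 0 ≤ t₂ → t₂ ≤ t₁ → t₁ ≤ T →
      (∫ s in t₂..t₁, ∫ x : ℝ, (heatKernel (t₁ - s) (y - x)) ^ 2 * Real.exp (2 * β₁ * |x|)) ≤
        K * Real.exp (2 * β₁ * |y|) * Real.sqrt (t₁ - t₂) := by
  refine ⟨2 * exp (2 * β₁ ^ 2 * T) / √(2 * π), fun t₂ t₁ y ht₂ ht₂₁ ht₁ ↦ ?_⟩
  have hbound : ∀ s ∈ Ioo t₂ t₁,
      ∫ x, heatKernel (t₁ - s) (y - x) ^ 2 * exp (2 * β₁ * |x|) ≤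
        exp (2 * β₁ ^ 2 * T) / √(2 * π) * exp (2 * β₁ * |y|) * (√(t₁ - s))⁻¹ := by
    intro s ⟨hs₂, hs₁⟩
    have hτ : 0 < t₁ - s := sub_pos.mpr hs₁
    calc _ ≤ exp (2 * β₁ ^ 2 * (t₁ - s)) * exp (2 * β₁ * |y|) / √(2 * π * (t₁ - s)) :=
          integral_heatKernel_sq_mul_exp_le β₁ y hτ
      _ = exp (2 * β₁ ^ 2 * (t₁ - s)) / √(2 * π) * exp (2 * β₁ * |y|) * (√(t₁ - s))⁻¹ := by
          rw [Real.sqrt_mul (by positivity)]; ring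
      _ ≤ _ := by gcongr; linarith
  calc _ ≤ 2 * (exp (2 * β₁ ^ 2 * T) / √(2 * π) * exp (2 * β₁ * |y|)) * √(t₁ - t₂) :=
        intervalIntegral_le_of_le_mul_inv_sqrt_sub ht₂₁
          (fun _ _ ↦ integral_nonneg fun _ ↦ by positivity) hbound
    _ = _ := by ring

/-- For every `β₁ > 0` and `T > 0` there is a constant `K = K(β₁, T)` such that for all
`0 ≤ t₂ ≤ t₁ ≤ T` and all `y ∈ ℝ`,
`∫_{t₂}^{t₁} ∫_ℝ p_{t₁ - s}(y - x)² e^{2 β₁ |x|} dx ds ≤ K e^{2 β₁ |y|} (t₁ - t₂)^{1/2}`. -/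
theorem heatKernel_sq_time_integral_le (β₁ T : ℝ) (hβ₁ : 0 < β₁) (hT : 0 < T) :
    ∃ K : ℝ, ∀ t₂ t₁ y : ℝ, 0 ≤ t₂ → t₂ ≤ t₁ → t₁ ≤ T →
      (∫ s in t₂..t₁, ∫ x : ℝ, (heatKernel (t₁ - s) (y - x)) ^ 2 * Real.exp (2 * β₁ * |x|)) ≤
        K * Real.exp (2 * β₁ * |y|) * Real.sqrt (t₁ - t₂) :=
  heatKernel_sq_time_integral_le_general β₁ T
end

section
/- For every β₁ > 0 and T > 0 there exists a constant K = K(β₁, T) such that for all t ∈ (0, T] and all r ∈ ℝ, ∫_ℝ (p_t(r+x) − p_t(r−x))² e^{3β₁|x|} dx ≤ K (1 + e^{3β₁|r|}) / √t. -/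
open MeasureTheory Real

/-!
Since `(p(r+x) - p(r-x))² ≤ 2 (p(r+x)² + p(r-x)²)` and `|x| ≤ |r| + |r ± x|`, it suffices,
at the cost of a factor `e^{a|r|}`, to bound `p_t(y)² e^{a|y|}` for `a = 3β₁`. One factor
`p_t(y) e^{a|y|}` is at most `e^{a²t/2} / √(2πt)` (complete the square:
`a|y| ≤ y²/(2t) + a²t/2`), and the other factor `p_t(y)` integrates to one.
This gives the bound `4 e^{a²T/2} e^{a|r|} / √t`.
-/

lemma heatKernel_eq_gaussianPDFReal {t : ℝ} (ht : 0 ≤ t) :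
    heatKernel t = ProbabilityTheory.gaussianPDFReal 0 t.toNNReal := by
  ext x
  simp [heatKernel, ProbabilityTheory.gaussianPDFReal, Real.coe_toNNReal t ht]

lemma heatKernel_nonneg (t x : ℝ) : 0 ≤ heatKernel t x := by
  unfold heatKernel
  positivity

lemma integrable_heatKernel {t : ℝ} (ht : 0 ≤ t) : Integrable (heatKernel t) := by
  rw [heatKernel_eq_gaussianPDFReal ht]
  exact ProbabilityTheory.integrable_gaussianPDFReal _ _

lemma integral_heatKernel {t : ℝ} (ht : 0 < t) : ∫ x, heatKernel t x = 1 := by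
  rw [heatKernel_eq_gaussianPDFReal ht.le]
  exact ProbabilityTheory.integral_gaussianPDFReal_eq_one _ (by simpa using ht)

lemma mul_abs_le_sq_div_add {t : ℝ} (ht : 0 < t) (a y : ℝ) :
    a * |y| ≤ y ^ 2 / (2 * t) + a ^ 2 * t / 2 := by
  have h : 2 * t * (a * |y|) ≤ y ^ 2 + (a * t) ^ 2 := by
    nlinarith [sq_nonneg (|y| - a * t), sq_abs y]
  have h' : y ^ 2 / (2 * t) + a ^ 2 * t / 2 = (y ^ 2 + (a * t) ^ 2) / (2 * t) := by
    field_simp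
  rw [h', le_div_iff₀ (by positivity)]
  linarith

lemma heatKernel_mul_exp_abs_le {t : ℝ} (ht : 0 < t) (a y : ℝ) :
    heatKernel t y * exp (a * |y|) ≤ (√(2 * π * t))⁻¹ * exp (a ^ 2 * t / 2) := by
  rw [heatKernel, mul_assoc, ← exp_add]
  gcongr
  have := mul_abs_le_sq_div_add ht a y
  rw [neg_div]
  linarith

lemma heatKernel_sq_mul_exp_abs_le {t a c : ℝ} (ht : 0 < t) (ha : 0 ≤ a) {x y : ℝ}
    (hxy : |x| ≤ c + |y|) :
    heatKernel t y ^ 2 * exp (a * |x|) ≤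
      exp (a * c) * (√(2 * π * t))⁻¹ * exp (a ^ 2 * t / 2) * heatKernel t y := by
  have hexp : exp (a * |x|) ≤ exp (a * c) * exp (a * |y|) := by
    rw [← exp_add, ← mul_add]
    gcongr
  have hp := heatKernel_nonneg t y
  calc heatKernel t y ^ 2 * exp (a * |x|)
      ≤ heatKernel t y ^ 2 * (exp (a * c) * exp (a * |y|)) := by gcongr
    _ = exp (a * c) * (heatKernel t y * exp (a * |y|)) * heatKernel t y := by ring
    _ ≤ exp (a * c) * ((√(2 * π * t))⁻¹ * exp (a ^ 2 * t / 2)) * heatKernel t y := by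
      gcongr exp (a * c) * ?_ * _
      exact heatKernel_mul_exp_abs_le ht a y
    _ = _ := by ring

lemma heatKernel_antisym_sq_mul_exp_abs_le {t a : ℝ} (ht : 0 < t) (ha : 0 ≤ a) (r x : ℝ) :
    (heatKernel t (r + x) - heatKernel t (r - x)) ^ 2 * exp (a * |x|) ≤
      2 * (exp (a * |r|) * (√(2 * π * t))⁻¹ * exp (a ^ 2 * t / 2)) *
        (heatKernel t (r + x) + heatKernel t (r - x)) := by
  set C := exp (a * |r|) * (√(2 * π * t))⁻¹ * exp (a ^ 2 * t / 2)
  have hplus : |x| ≤ |r| + |r + x| := by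
    calc |x| = |(r + x) - r| := by ring_nf
      _ ≤ |r + x| + |r| := abs_sub _ _
      _ = |r| + |r + x| := add_comm _ _
  have hminus : |x| ≤ |r| + |r - x| := by
    calc |x| = |r - (r - x)| := by ring_nf
      _ ≤ |r| + |r - x| := abs_sub _ _
  have hsq : ∀ u v : ℝ, (u - v) ^ 2 ≤ 2 * (u ^ 2 + v ^ 2) := fun u v => by
    nlinarith [sq_nonneg (u + v)]
  calc (heatKernel t (r + x) - heatKernel t (r - x)) ^ 2 * exp (a * |x|)
      ≤ 2 * (heatKernel t (r + x) ^ 2 * exp (a * |x|) +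
          heatKernel t (r - x) ^ 2 * exp (a * |x|)) := by
        rw [← add_mul, ← mul_assoc]
        gcongr
        exact hsq _ _
    _ ≤ 2 * (C * heatKernel t (r + x) + C * heatKernel t (r - x)) := by
        gcongr 2 * (?_ + ?_)
        · exact heatKernel_sq_mul_exp_abs_le ht ha hplus
        · exact heatKernel_sq_mul_exp_abs_le ht ha hminus
    _ = 2 * C * (heatKernel t (r + x) + heatKernel t (r - x)) := by ring

lemma integral_heatKernel_antisym_sq_mul_exp_abs_le {t a : ℝ} (ht : 0 < t) (ha : 0 ≤ a) (r : ℝ) :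
    ∫ x, (heatKernel t (r + x) - heatKernel t (r - x)) ^ 2 * exp (a * |x|) ≤
      4 * exp (a * |r|) * exp (a ^ 2 * t / 2) / √(2 * π * t) := by
  set C := exp (a * |r|) * (√(2 * π * t))⁻¹ * exp (a ^ 2 * t / 2)
  have hp := integrable_heatKernel ht.le
  have hplus : Integrable fun x => heatKernel t (r + x) := hp.comp_add_left r
  have hminus : Integrable fun x => heatKernel t (r - x) := hp.comp_sub_left r
  calc ∫ x, (heatKernel t (r + x) - heatKernel t (r - x)) ^ 2 * exp (a * |x|)
      ≤ ∫ x, 2 * C * (heatKernel t (r + x) + heatKernel t (r - x)) :=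
        integral_mono_of_nonneg (.of_forall fun x => by positivity)
          ((hplus.add hminus).const_mul _)
          (.of_forall (heatKernel_antisym_sq_mul_exp_abs_le ht ha r))
    _ = 2 * C * (1 + 1) := by
        rw [integral_const_mul, integral_add hplus hminus,
          integral_add_left_eq_self (heatKernel t), integral_sub_left_eq_self (heatKernel t),
          integral_heatKernel ht]
    _ = _ := by ring

theorem heatKernel_antisym_sq_integral_le_general (β₁ T : ℝ) (hβ₁ : 0 < β₁) :
    ∃ K : ℝ, ∀ t r : ℝ, 0 < t → t ≤ T →
      (∫ x : ℝ, (heatKernel t (r + x) - heatKernel t (r - x)) ^ 2 * Real.exp (3 * β₁ * |x|)) ≤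
        K * (1 + Real.exp (3 * β₁ * |r|)) / Real.sqrt t := by
  refine ⟨4 * exp ((3 * β₁) ^ 2 * T / 2), fun t r ht htT => ?_⟩
  have ht_le : t ≤ 2 * π * t := by nlinarith [Real.pi_gt_three]
  calc _ ≤ 4 * exp (3 * β₁ * |r|) * exp ((3 * β₁) ^ 2 * t / 2) / √(2 * π * t) :=
        integral_heatKernel_antisym_sq_mul_exp_abs_le ht (by positivity) r
    _ ≤ 4 * exp ((3 * β₁) ^ 2 * T / 2) * (1 + exp (3 * β₁ * |r|)) / √t := by
        rw [mul_right_comm]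
        gcongr
        linarith [exp_pos (3 * β₁ * |r|)]

/-- For every `β₁ > 0` and `T > 0` there is a constant `K = K(β₁, T)` such that for all
`t ∈ (0, T]` and all `r ∈ ℝ`,
`∫_ℝ (p_t(r+x) - p_t(r-x))² e^{3β₁|x|} dx ≤ K (1 + e^{3β₁|r|}) / √t`. -/
theorem heatKernel_antisym_sq_integral_le (β₁ T : ℝ) (hβ₁ : 0 < β₁) (hT : 0 < T) :
    ∃ K : ℝ, ∀ t r : ℝ, 0 < t → t ≤ T →
      (∫ x : ℝ, (heatKernel t (r + x) - heatKernel t (r - x)) ^ 2 * Real.exp (3 * β₁ * |x|)) ≤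
        K * (1 + Real.exp (3 * β₁ * |r|)) / Real.sqrt t :=
  heatKernel_antisym_sq_integral_le_general β₁ T hβ₁
end
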